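/- arXiv:1805.05483 — 2 statements merged into one kernel-verified Lean document; each statement's English description precedes it below -/
import Mathlib

section
/- Let G be a finite simple graph of order n with at least one edge and adjacency matrix A, let k ≥ 2 be an integer, and let p, q > 1 be real numbers with 1/p + 1/q = 1. Then for every vertex v_j, ((|A|^k)_{jj})^q / ((|A|^{p(k−1)+1})_{jj})^{q/p} ≤ E_G(v_j), where |A|^s denotes the s-th power of |A| (defined via the functional calculus for real exponents s). -/
open Matrix Finset

open scoped ComplexOrder

/-- The positive semidefinite square root of a positive semidefinite matrix (the definition
`Matrix.PosSemidef.sqrt` of the older Mathlib, removed since). -/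
noncomputable def Matrix.PosSemidef.sqrt {n 𝕜 : Type*} [Fintype n] [DecidableEq n] [RCLike 𝕜]
    {A : Matrix n n 𝕜} (hA : A.PosSemidef) : Matrix n n 𝕜 :=
  hA.1.eigenvectorUnitary.1 * diagonal ((↑) ∘ (√·) ∘ hA.1.eigenvalues) *
    (star hA.1.eigenvectorUnitary : Matrix n n 𝕜)

theorem Matrix.PosSemidef.posSemidef_sqrt {n 𝕜 : Type*} [Fintype n] [DecidableEq n] [RCLike 𝕜]
    {A : Matrix n n 𝕜} (hA : A.PosSemidef) : hA.sqrt.PosSemidef := by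
  unfold Matrix.PosSemidef.sqrt
  rw [Matrix.star_eq_conjTranspose]
  apply PosSemidef.mul_mul_conjTranspose_same
  refine posSemidef_diagonal_iff.mpr fun i ↦ ?_
  rw [Function.comp_apply, RCLike.nonneg_iff]
  constructor
  · simp only [Function.comp_apply, RCLike.ofReal_re]
    exact Real.sqrt_nonneg _
  · simp only [Function.comp_apply, RCLike.ofReal_im]

/-- The energy of the vertex `i` of a finite simple graph `G`:
the `(i,i)` entry of `|A| = (A Aᴴ)^{1/2}`, where `A` is the adjacency matrix. -/
noncomputable def vertexEnergy {n : ℕ} (G : SimpleGraph (Fin n)) [DecidableRel G.Adj]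
    (i : Fin n) : ℝ :=
  (Matrix.posSemidef_self_mul_conjTranspose (G.adjMatrix ℝ)).sqrt i i

/-- Real powers of a positive semidefinite real matrix, via the functional calculus:
apply `x ↦ x ^ s` to the eigenvalues in a spectral decomposition. -/
noncomputable def psdRPow {n : ℕ} {B : Matrix (Fin n) (Fin n) ℝ} (hB : B.PosSemidef)
    (s : ℝ) : Matrix (Fin n) (Fin n) ℝ :=
  (hB.1.eigenvectorUnitary : Matrix (Fin n) (Fin n) ℝ) *
    Matrix.diagonal (fun j => hB.1.eigenvalues j ^ s) *
    (star hB.1.eigenvectorUnitary : Matrix (Fin n) (Fin n) ℝ)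

/-! Diagonalise `|A| = U diag(λ) Uᵀ`. Every diagonal entry of a real power of `|A|` is then a
weighted power sum `(|A|^s)_{jj} = ∑ᵢ U_{ji}² λᵢ^s`, and the inequality is Hölder's inequality
for the weights `U_{ji}² λᵢ` and the functions `λᵢ^(k-1)`, raised to the power `q`. -/

section psdRPow

variable {n : ℕ} {B : Matrix (Fin n) (Fin n) ℝ} (hB : B.PosSemidef)

lemma psdRPow_apply_self (s : ℝ) (j : Fin n) :
    psdRPow hB s j j =
      ∑ i, (hB.1.eigenvectorUnitary : Matrix (Fin n) (Fin n) ℝ) j i ^ 2 *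
        hB.1.eigenvalues i ^ s := by
  rw [psdRPow, mul_apply]
  simp only [mul_diagonal, star_apply, star_trivial]
  exact sum_congr rfl fun i _ => by ring

lemma psdRPow_one : psdRPow hB 1 = B := by
  conv_rhs => rw [hB.1.spectral_theorem, Unitary.conjStarAlgAut_apply]
  simp only [psdRPow, Real.rpow_one]
  rfl

end psdRPow

namespace Real

variable {ι : Type*} (s : Finset ι) {w l : ι → ℝ} {p q r : ℝ}

lemma sum_mul_rpow_le_mul_rpow (hw : ∀ i, 0 ≤ w i) (hl : ∀ i, 0 ≤ l i)
    (hpq : p.HolderConjugate q) (hr : 1 ≤ r) :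
    ∑ i ∈ s, w i * l i ^ r ≤
      (∑ i ∈ s, w i * l i ^ (p * (r - 1) + 1)) ^ p⁻¹ * (∑ i ∈ s, w i * l i) ^ q⁻¹ := by
  have holder := inner_le_weight_mul_Lp_of_nonneg s hpq.lt.le (fun i => w i * l i)
    (fun i => l i ^ (r - 1)) (fun i => mul_nonneg (hw i) (hl i)) (fun i => rpow_nonneg (hl i) _)
  have hpow : ∀ i, l i * l i ^ (r - 1) = l i ^ r := fun i => by
    rw [← rpow_one_add' (hl i) (by linarith), add_sub_cancel]
  have hpow' : ∀ i, l i * (l i ^ (r - 1)) ^ p = l i ^ (p * (r - 1) + 1) := fun i => by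
    rw [← rpow_mul (hl i), ← rpow_one_add' (hl i) (by nlinarith [hpq.pos]), mul_comm, add_comm]
  simpa only [mul_assoc, hpow, hpow', hpq.one_sub_inv, mul_comm ((∑ i ∈ s, w i * l i) ^ q⁻¹)]
    using holder

lemma rpow_div_rpow_le_of_le_mul_rpow {N D E : ℝ} (hpq : p.HolderConjugate q)
    (hN : 0 ≤ N) (hD : 0 ≤ D) (hE : 0 ≤ E) (h : N ≤ D ^ p⁻¹ * E ^ q⁻¹) :
    N ^ q / D ^ (q / p) ≤ E := by
  rcases hD.eq_or_lt with rfl | hD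
  · rw [zero_rpow (div_ne_zero hpq.symm.ne_zero hpq.ne_zero), div_zero]
    exact hE
  rw [div_le_iff₀ (rpow_pos_of_pos hD _)]
  calc N ^ q ≤ (D ^ p⁻¹ * E ^ q⁻¹) ^ q := rpow_le_rpow hN h hpq.symm.nonneg
    _ = E * D ^ (q / p) := by
      rw [mul_rpow (rpow_nonneg hD.le _) (rpow_nonneg hE _), ← rpow_mul hD.le, ← rpow_mul hE,
        inv_mul_cancel₀ hpq.symm.ne_zero, rpow_one, inv_mul_eq_div, mul_comm]

lemma sum_mul_rpow_rpow_div_le (hw : ∀ i, 0 ≤ w i) (hl : ∀ i, 0 ≤ l i)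
    (hpq : p.HolderConjugate q) (hr : 1 ≤ r) :
    (∑ i ∈ s, w i * l i ^ r) ^ q / (∑ i ∈ s, w i * l i ^ (p * (r - 1) + 1)) ^ (q / p) ≤
      ∑ i ∈ s, w i * l i :=
  rpow_div_rpow_le_of_le_mul_rpow hpq
    (sum_nonneg fun i _ => mul_nonneg (hw i) (rpow_nonneg (hl i) _))
    (sum_nonneg fun i _ => mul_nonneg (hw i) (rpow_nonneg (hl i) _))
    (sum_nonneg fun i _ => mul_nonneg (hw i) (hl i))
    (sum_mul_rpow_le_mul_rpow s hw hl hpq hr)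

end Real

theorem stmt_4_general {n : ℕ} (G : SimpleGraph (Fin n)) [DecidableRel G.Adj]
    (k : ℕ) (hk : 2 ≤ k)
    (p q : ℝ) (hp : 1 < p) (hpq : 1 / p + 1 / q = 1) (j : Fin n) :
    ((psdRPow (Matrix.posSemidef_self_mul_conjTranspose (G.adjMatrix ℝ)).posSemidef_sqrt
        (k : ℝ)) j j) ^ q /
      ((psdRPow (Matrix.posSemidef_self_mul_conjTranspose (G.adjMatrix ℝ)).posSemidef_sqrt
        (p * ((k : ℝ) - 1) + 1)) j j) ^ (q / p) ≤ vertexEnergy G j := by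
  set hB := (Matrix.posSemidef_self_mul_conjTranspose (G.adjMatrix ℝ)).posSemidef_sqrt
  have hE : vertexEnergy G j = psdRPow hB 1 j j := by rw [psdRPow_one]; rfl
  rw [hE]
  simp only [psdRPow_apply_self, Real.rpow_one]
  exact Real.sum_mul_rpow_rpow_div_le _ (fun i => sq_nonneg _) hB.eigenvalues_nonneg
    (Real.holderConjugate_iff.2 ⟨hp, by simpa using hpq⟩) (by exact_mod_cast one_le_two.trans hk)

theorem stmt_4 {n : ℕ} (G : SimpleGraph (Fin n)) [DecidableRel G.Adj]
    (hedge : G.edgeSet.Nonempty) (k : ℕ) (hk : 2 ≤ k)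
    (p q : ℝ) (hp : 1 < p) (hq : 1 < q) (hpq : 1 / p + 1 / q = 1) (j : Fin n) :
    ((psdRPow (Matrix.posSemidef_self_mul_conjTranspose (G.adjMatrix ℝ)).posSemidef_sqrt
        (k : ℝ)) j j) ^ q /
      ((psdRPow (Matrix.posSemidef_self_mul_conjTranspose (G.adjMatrix ℝ)).posSemidef_sqrt
        (p * ((k : ℝ) - 1) + 1)) j j) ^ (q / p) ≤ vertexEnergy G j :=
  stmt_4_general G k hk p q hp hpq j
end

section
/- Let G be a finite simple graph and v a vertex with deg(v) = 1 whose connected component has at least 3 vertices (i.e., the component of v is not K_2). Then E_G(v) < 1. -/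
open Matrix Finset

/-!
Let `B = |A|`, a real symmetric matrix with `B² = A²`. The entry `(A²)_vv = deg v = 1` is also the
squared length of the column `v` of `B`, so `B_vv ≥ 1` would force that column to be the unit
vector `e_v`, whence `A² e_v = B² e_v = e_v`: no walk of length two leads from `v` to another
vertex. Then the unique neighbour `w` of `v` has no neighbour besides `v`, and the component of `v`
is just the edge `vw`.
-/

section
open scoped ComplexOrder

namespace Matrix.PosSemidef

variable {n 𝕜 : Type*} [Fintype n] [DecidableEq n] [RCLike 𝕜] {A : Matrix n n 𝕜}

theorem sqrt_mul_self (hA : A.PosSemidef) : hA.sqrt * hA.sqrt = A := by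
  have hD : diagonal (((↑) ∘ (√·) ∘ hA.1.eigenvalues : n → 𝕜)) *
      diagonal ((↑) ∘ (√·) ∘ hA.1.eigenvalues) = diagonal (RCLike.ofReal ∘ hA.1.eigenvalues) := by
    rw [diagonal_mul_diagonal]
    congr 1
    funext i
    simp only [Function.comp_apply]
    rw [← RCLike.ofReal_mul, Real.mul_self_sqrt (hA.eigenvalues_nonneg i)]
  have hU : (star hA.1.eigenvectorUnitary : Matrix n n 𝕜) * hA.1.eigenvectorUnitary.1 = 1 :=
    Unitary.coe_star_mul_self _
  conv_rhs => rw [hA.1.spectral_theorem, Unitary.conjStarAlgAut_apply]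
  unfold Matrix.PosSemidef.sqrt
  rw [← hD]
  simp only [Matrix.mul_assoc]
  rw [← Matrix.mul_assoc (star _ : Matrix n n 𝕜) _ _, hU, Matrix.one_mul]

theorem isHermitian_sqrt (hA : A.PosSemidef) : hA.sqrt.IsHermitian := by
  unfold Matrix.PosSemidef.sqrt Matrix.IsHermitian
  rw [conjTranspose_mul, conjTranspose_mul, diagonal_conjTranspose]
  simp only [Matrix.mul_assoc, star_eq_conjTranspose, conjTranspose_conjTranspose]
  congr 3
  funext i
  simp [RCLike.star_def]

end Matrix.PosSemidef

end

namespace Matrix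

variable {ι R : Type*} [Fintype ι] {B : Matrix ι ι R}

theorem IsSymm.mul_self_apply_self [Semiring R] (hB : B.IsSymm) (i : ι) :
    (B * B) i i = ∑ j, B j i ^ 2 := by
  simp only [mul_apply, sq, hB.apply i]

variable [CommRing R] [LinearOrder R] [IsStrictOrderedRing R]

theorem IsSymm.apply_eq_zero_of_mul_self_apply_self_le (hB : B.IsSymm) {i : ι}
    (h : (B * B) i i ≤ B i i ^ 2) {j : ι} (hji : j ≠ i) : B j i = 0 := by
  classical
  rw [hB.mul_self_apply_self, ← add_sum_erase _ _ (mem_univ i)] at h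
  have hrest : ∑ k ∈ univ.erase i, B k i ^ 2 = 0 :=
    le_antisymm (by linarith) (sum_nonneg fun k _ => sq_nonneg _)
  rw [sum_eq_zero_iff_of_nonneg fun k _ => sq_nonneg _] at hrest
  exact pow_eq_zero_iff two_ne_zero |>.mp (hrest j (mem_erase.mpr ⟨hji, mem_univ j⟩))

theorem IsSymm.mul_self_apply_eq_zero_of_mul_self_apply_self_le (hB : B.IsSymm) {i : ι}
    (h : (B * B) i i ≤ B i i ^ 2) {j : ι} (hji : j ≠ i) : (B * B) j i = 0 := by
  classical
  rw [mul_apply, sum_eq_single i]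
  · rw [hB.apply_eq_zero_of_mul_self_apply_self_le h hji, zero_mul]
  · intro k _ hki
    rw [hB.apply_eq_zero_of_mul_self_apply_self_le h hki, mul_zero]
  · exact fun hi => (hi (mem_univ i)).elim

end Matrix

namespace SimpleGraph

variable {V : Type*} (G : SimpleGraph V)

theorem reachable_subset_pair_of_isolated_edge {v w : V} (hv : ∀ u, G.Adj v u → u = w)
    (hw : ∀ u, G.Adj w u → u = v) : {u | G.Reachable v u} ⊆ {v, w} := by
  suffices h : ∀ a u, G.Walk a u → a = v ∨ a = w → u = v ∨ u = w from
    fun u ⟨p⟩ => h v u p (Or.inl rfl)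
  intro a u p ha
  induction p with
  | nil => exact ha
  | cons hxy _ ih =>
    apply ih
    rcases ha with rfl | rfl
    · exact Or.inr (hv _ hxy)
    · exact Or.inl (hw _ hxy)

variable [Fintype V] [DecidableRel G.Adj] {R : Type*} [Semiring R] [PartialOrder R]
  [IsStrictOrderedRing R]

theorem adjMatrix_mul_self_apply_pos {u w v : V} (huw : G.Adj u w) (hwv : G.Adj w v) :
    0 < (G.adjMatrix R * G.adjMatrix R) u v := by
  rw [adjMatrix_mul_apply]
  calc (0 : R) < G.adjMatrix R w v := by simp [hwv]
    _ ≤ ∑ k ∈ G.neighborFinset u, G.adjMatrix R k v :=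
      single_le_sum (f := fun k => G.adjMatrix R k v)
        (fun k _ => by rw [adjMatrix_apply]; split_ifs <;> norm_num)
        ((G.mem_neighborFinset u w).mpr huw)

end SimpleGraph

theorem stmt_13 {n : ℕ} (G : SimpleGraph (Fin n)) [DecidableRel G.Adj]
    (v : Fin n) (hd : G.degree v = 1)
    (hcomp : 3 ≤ ({u : Fin n | G.Reachable v u} : Set (Fin n)).ncard) :
    vertexEnergy G v < 1 := by
  set A := G.adjMatrix ℝ
  have hPSD := posSemidef_self_mul_conjTranspose A
  set B := hPSD.sqrt
  have hBB : B * B = A * A := by rw [hPSD.sqrt_mul_self, (G.isHermitian_adjMatrix ℝ).eq]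
  have hBsymm : B.IsSymm := hPSD.isHermitian_sqrt
  by_contra! hBvv
  have hle : (B * B) v v ≤ B v v ^ 2 := by
    have h1 : (1 : ℝ) ≤ B v v := hBvv
    rw [hBB, G.adjMatrix_mul_self_apply_self, hd, Nat.cast_one]
    nlinarith
  obtain ⟨w, hw⟩ := Finset.card_eq_one.mp ((G.card_neighborFinset_eq_degree v).trans hd)
  have hv_adj : ∀ u, G.Adj v u → u = w := fun u h => by
    simpa [hw] using (G.mem_neighborFinset v u).mpr h
  have hvw : G.Adj v w := (G.mem_neighborFinset v w).mp (hw ▸ Finset.mem_singleton_self w)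
  have hw_adj : ∀ u, G.Adj w u → u = v := fun u hwu => by
    by_contra huv
    have := G.adjMatrix_mul_self_apply_pos (R := ℝ) hwu.symm hvw.symm
    rw [← hBB, hBsymm.mul_self_apply_eq_zero_of_mul_self_apply_self_le hle huv] at this
    exact lt_irrefl _ this
  have := Set.ncard_le_ncard (G.reachable_subset_pair_of_isolated_edge hv_adj hw_adj)
  rw [Set.ncard_pair (G.ne_of_adj hvw)] at this
  omega
end
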